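/- arXiv:math/0602309 — 5 statements merged into one kernel-verified Lean document; each statement's English description precedes it below -/
import Mathlib

section
/- Let γ : ℤ → ℝ be a nondecreasing sequence with |γᵢ| → ∞ as |i| → ∞, and define γʲᵢ = γ_{i+j} − γᵢ. Suppose the family {γʲ : j ∈ ℤ} is equipotentially almost periodic, i.e., for every ε > 0 the set of integers q with sup_{i∈ℤ} |γ_{i+q} − γᵢ − τ| < ε for some real τ is such that the corresponding set of τ's is relatively dense in ℝ. Then for every l > 0 there exists n₀ ∈ ℕ such that every interval of length l contains at most n₀ terms of the sequence γ. -/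
open Filter

/-- A set of integers is relatively dense. -/
def RelDenseZ (S : Set ℤ) : Prop := ∃ N : ℤ, 0 < N ∧ ∀ a : ℤ, ∃ q ∈ S, q ∈ Set.Icc a (a + N)

/-- The family of difference sequences γʲᵢ = γ_{i+j} − γᵢ is equipotentially
almost periodic: for every ε > 0 there is a relatively dense set of common
ε-almost periods of all γʲ. -/
def EquipAP (γ : ℤ → ℝ) : Prop :=
  ∀ ε : ℝ, 0 < ε → RelDenseZ
    {q : ℤ | ∀ i j : ℤ, |γ (i + j + q) - γ (i + q) - (γ (i + j) - γ i)| < ε}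

/-- Lemma 4: if γ is nondecreasing, unbounded in both directions,
with equipotentially almost periodic differences, then every interval of length l
contains at most n₀ terms of γ. -/
theorem finitely_many_terms_in_intervals
    (γ : ℤ → ℝ) (hmono : Monotone γ)
    (hinf : Tendsto (fun i => |γ i|) (atTop ⊔ atBot) atTop)
    (htop : Tendsto γ atTop atTop) (hbot : Tendsto γ atBot atBot)
    (hAP : EquipAP γ) :
    ∀ l : ℝ, 0 < l → ∃ n₀ : ℕ, ∀ a : ℝ,
      {i : ℤ | γ i ∈ Set.Icc a (a + l)}.Finite ∧
      {i : ℤ | γ i ∈ Set.Icc a (a + l)}.ncard ≤ n₀ := by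
  intro l hl
  obtain ⟨N, hNpos, hN⟩ := hAP 1 one_pos
  obtain ⟨n, hn⟩ := (htop.eventually_ge_atTop (γ N + l + 2)).exists
  have hnpos : 0 < n := by
    by_contra h
    push_neg at h
    have : γ n ≤ γ N := hmono (h.trans hNpos.le)
    linarith
  have key : ∀ i : ℤ, γ i + l < γ (i + n) := by
    intro i
    obtain ⟨q, hq, hq1, hq2⟩ := hN (-i)
    have h1 : |γ (i + n + q) - γ (i + q) - (γ (i + n) - γ i)| < 1 := hq i n
    have h2 : γ N + l + 2 ≤ γ (i + n + q) := hn.trans (hmono (by linarith))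
    have h3 : γ (i + q) ≤ γ N := hmono (by linarith)
    have h4 := abs_lt.mp h1
    linarith [h4.1, h4.2]
  refine ⟨(2 * n + 1).toNat, fun a => ?_⟩
  rcases Set.eq_empty_or_nonempty {i : ℤ | γ i ∈ Set.Icc a (a + l)} with hS | ⟨x, hx⟩
  · rw [hS]; exact ⟨Set.finite_empty, by simp⟩
  · have hsub : {i : ℤ | γ i ∈ Set.Icc a (a + l)} ⊆ Set.Icc (x - n) (x + n) := by
      intro i hi
      simp only [Set.mem_setOf_eq, Set.mem_Icc] at hi hx ⊢
      constructor
      · by_contra h; push_neg at h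
        have : γ (i + n) ≤ γ x := hmono (by linarith)
        have := key i
        linarith [hi.1, hx.2]
      · by_contra h; push_neg at h
        have : γ (x + n) ≤ γ i := hmono (by linarith)
        have := key x
        linarith [hi.2, hx.1]
    have hfin := (Set.finite_Icc (x - n) (x + n)).subset hsub
    refine ⟨hfin, ?_⟩
    calc {i : ℤ | γ i ∈ Set.Icc a (a + l)}.ncard
        ≤ (Set.Icc (x - n) (x + n)).ncard :=
          Set.ncard_le_ncard hsub (Set.finite_Icc _ _)
      _ = (2 * n + 1).toNat := by
          rw [← Finset.coe_Icc, Set.ncard_coe_finset, Int.card_Icc]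
          omega
end

section
/- For sequences θ⁽¹⁾, θ⁽²⁾, θ⁽³⁾ ∈ Θ (strictly increasing real sequences indexed by ℤ, unbounded in both directions), define θ ε θ' to mean there exist nondecreasing representatives γ, γ' (sequences whose range equals the range of θ, θ' respectively, with finite maximal multiplicity) such that sup_i |γᵢ − γ'ᵢ| < ε. Then θ⁽¹⁾ ε₁ θ⁽²⁾ and θ⁽²⁾ ε₂ θ⁽³⁾ imply θ⁽¹⁾ (ε₁+ε₂) θ⁽³⁾. -/
open Filter

/-- θ belongs to Θ: strictly increasing, unbounded in both directions. -/
def InTheta (θ : ℤ → ℝ) : Prop :=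
  StrictMono θ ∧ Tendsto θ atTop atTop ∧ Tendsto θ atBot atBot

/-- γ is a representative of θ: nondecreasing, same range, finite maximal
multiplicity. -/
def IsRepr (γ θ : ℤ → ℝ) : Prop :=
  Monotone γ ∧ Set.range γ = Set.range θ ∧
    ∃ m₀ : ℕ, ∀ x : ℝ, {k : ℤ | γ k = x}.Finite ∧ {k : ℤ | γ k = x}.ncard ≤ m₀

/-- ε-equivalence of sequences: some representatives are within sup-distance < ε. -/
def SeqEquiv (θ θ' : ℤ → ℝ) (ε : ℝ) : Prop :=
  ∃ γ γ' : ℤ → ℝ, IsRepr γ θ ∧ IsRepr γ' θ' ∧ ∃ c : ℝ, c < ε ∧ ∀ i, |γ i - γ' i| ≤ c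

/-!
Two representatives `γ`, `δ` of the same `θ` differ only in how often they repeat each value.
Stretching `γ` by a factor `N` larger than the maximal multiplicity of `δ`, i.e. passing to
`ρ j = γ (j / N)`, makes every fibre of `ρ` longer than the corresponding fibre of `δ`, so that
`ρ = δ ∘ v` for a monotone surjection `v` with bounded fibres. Precomposing representatives with
such reindexings keeps them representatives of the same sequence, so the middle representatives of
the two hypotheses can be aligned, and the triangle inequality for `|·|` finishes the proof.
-/

open Set Function

def HasBoundedFibers {ι α : Type*} (f : ι → α) (m : ℕ) : Prop :=
  ∀ x, {k | f k = x}.Finite ∧ {k | f k = x}.ncard ≤ m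

theorem HasBoundedFibers.comp {ι β α : Type*} {γ : β → α} {u : ι → β} {m M : ℕ}
    (hγ : HasBoundedFibers γ m) (hu : HasBoundedFibers u M) : HasBoundedFibers (γ ∘ u) (m * M) := by
  intro x
  have hunion : {j | (γ ∘ u) j = x} = ⋃ k ∈ (hγ x).1.toFinset, {j | u j = k} := by
    ext j
    simp
  rw [hunion]
  refine ⟨(hγ x).1.toFinset.finite_toSet.biUnion fun k _ => (hu k).1, ?_⟩
  calc (⋃ k ∈ (hγ x).1.toFinset, {j | u j = k}).ncard
      ≤ ∑ k ∈ (hγ x).1.toFinset, {j | u j = k}.ncard := Finset.set_ncard_biUnion_le _ _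
    _ ≤ (hγ x).1.toFinset.card * M := Finset.sum_le_card_nsmul _ _ _ fun k _ => (hu k).2
    _ ≤ m * M := by
      rw [← Set.ncard_eq_toFinset_card _ (hγ x).1]
      exact Nat.mul_le_mul_right _ (hγ x).2

theorem HasBoundedFibers.of_comp {ι β α : Type*} {g : β → α} {v : ι → β} {M : ℕ}
    (h : HasBoundedFibers (g ∘ v) M) : HasBoundedFibers v M := by
  intro k
  have hsub : {j | v j = k} ⊆ {j | (g ∘ v) j = g k} := fun j hj => congrArg g hj
  exact ⟨(h (g k)).1.subset hsub, (Set.ncard_le_ncard hsub (h (g k)).1).trans (h (g k)).2⟩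

theorem Monotone.setOf_eq_eq_Icc {ι α : Type*} [ConditionallyCompleteLinearOrder ι]
    [PartialOrder α] {γ : ι → α} (hγ : Monotone γ) {x : α} {k : ι} (hk : γ k = x)
    (hfin : {k | γ k = x}.Finite) :
    {k | γ k = x} = Icc (sInf {k | γ k = x}) (sSup {k | γ k = x}) := by
  have hne : {k | γ k = x}.Nonempty := ⟨k, hk⟩
  have hinf : γ (sInf {k | γ k = x}) = x := hne.csInf_mem hfin
  have hsup : γ (sSup {k | γ k = x}) = x := hne.csSup_mem hfin
  ext i
  refine ⟨fun hi => ⟨csInf_le hfin.bddBelow hi, le_csSup hfin.bddAbove hi⟩, fun ⟨hi₁, hi₂⟩ => ?_⟩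
  exact le_antisymm (hsup ▸ hγ hi₂) (hinf ▸ hγ hi₁)

theorem Int.ncard_Icc (a b : ℤ) : (Icc a b).ncard = (b + 1 - a).toNat := by
  rw [← Finset.coe_Icc, Set.ncard_coe_finset, Int.card_Icc]

theorem Int.setOf_ediv_eq {N : ℤ} (hN : 0 < N) (k : ℤ) :
    {j : ℤ | j / N = k} = Ico (k * N) (k * N + N) := by
  ext j
  show j / N = k ↔ k * N ≤ j ∧ j < k * N + N
  rw [le_antisymm_iff, Int.le_ediv_iff_mul_le hN, ← Int.lt_add_one_iff, Int.ediv_lt_iff_lt_mul hN]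
  constructor <;> rintro ⟨h₁, h₂⟩ <;> constructor <;> linarith

def IsReindexing (u : ℤ → ℤ) : Prop :=
  Monotone u ∧ Surjective u ∧ ∃ M, HasBoundedFibers u M

theorem isReindexing_ediv {N : ℤ} (hN : 0 < N) : IsReindexing (· / N) := by
  refine ⟨fun _ _ h => Int.ediv_le_ediv hN h,
    fun k => ⟨k * N, Int.mul_ediv_cancel k hN.ne'⟩, N.toNat, fun k => ?_⟩
  rw [Int.setOf_ediv_eq hN, ← Finset.coe_Ico, Set.ncard_coe_finset, Int.card_Ico]
  exact ⟨Finset.finite_toSet _, by simp⟩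

theorem IsRepr.comp {γ θ : ℤ → ℝ} {u : ℤ → ℤ} (hγ : IsRepr γ θ) (hu : IsReindexing u) :
    IsRepr (γ ∘ u) θ := by
  obtain ⟨hγm, hγr, m, hγf⟩ := hγ
  obtain ⟨hum, hus, M, huf⟩ := hu
  exact ⟨hγm.comp hum, by rw [range_comp, hus.range_eq, image_univ, hγr], m * M,
    HasBoundedFibers.comp hγf huf⟩

theorem exists_monotone_surjective_comp_eq {α : Type*} [PartialOrder α] {γ ρ : ℤ → α}
    (hγ : Monotone γ) (hρ : Monotone ρ) (hrange : range ρ = range γ)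
    (hγfin : ∀ x, {k | γ k = x}.Finite) (hρfin : ∀ x, {j | ρ j = x}.Finite)
    (hcard : ∀ x, {k | γ k = x}.ncard ≤ {j | ρ j = x}.ncard) :
    ∃ u : ℤ → ℤ, Monotone u ∧ Surjective u ∧ γ ∘ u = ρ := by
  set a : α → ℤ := fun x => sInf {k | γ k = x}
  set b : α → ℤ := fun x => sSup {k | γ k = x}
  set c : α → ℤ := fun x => sInf {j | ρ j = x}
  set d : α → ℤ := fun x => sSup {j | ρ j = x}
  have hA : ∀ j, {k | γ k = ρ j} = Icc (a (ρ j)) (b (ρ j)) := fun j => by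
    obtain ⟨k, hk⟩ := hrange.le (mem_range_self j)
    exact hγ.setOf_eq_eq_Icc hk (hγfin _)
  have hF : ∀ j, {i | ρ i = ρ j} = Icc (c (ρ j)) (d (ρ j)) := fun j =>
    hρ.setOf_eq_eq_Icc rfl (hρfin _)
  have hcj : ∀ j, c (ρ j) ≤ j := fun j => ((hF j).subset (rfl : ρ j = ρ j)).1
  have hγA : ∀ j k, k ∈ Icc (a (ρ j)) (b (ρ j)) → γ k = ρ j := fun j _ hk =>
    (hA j).symm.subset hk
  have hab : ∀ j, a (ρ j) ≤ b (ρ j) := fun j => by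
    obtain ⟨k, hk⟩ := hrange.le (mem_range_self j)
    exact nonempty_Icc.mp ⟨k, (hA j).subset hk⟩
  have hwidth : ∀ j, b (ρ j) - a (ρ j) ≤ d (ρ j) - c (ρ j) := fun j => by
    have h := hcard (ρ j)
    rw [hA j, hF j, Int.ncard_Icc, Int.ncard_Icc] at h
    have := hab j
    omega
  -- `u` shifts the fibre `[c, d]` of `ρ` onto the fibre `[a, b]` of `γ`, clamped at `b`;
  -- it hits all of `[a, b]` because `b - a ≤ d - c`.
  set u : ℤ → ℤ := fun j => min (b (ρ j)) (a (ρ j) + (j - c (ρ j)))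
  have huA : ∀ j, u j ∈ Icc (a (ρ j)) (b (ρ j)) := fun j => by
    have := hcj j
    have := hab j
    exact ⟨le_min (by omega) (by omega), min_le_left _ _⟩
  refine ⟨u, fun j j' hjj' => ?_, fun k => ?_, funext fun j => hγA j _ (huA j)⟩
  · rcases (hρ hjj').eq_or_lt with heq | hlt
    · simp only [u, heq]
      omega
    · have hba : b (ρ j) < a (ρ j') := hγ.reflect_lt <| by
        rwa [hγA j _ ⟨hab j, le_rfl⟩, hγA j' _ ⟨le_rfl, hab j'⟩]
      exact (huA j).2.trans (hba.le.trans (huA j').1)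
  · obtain ⟨j₀, hj₀⟩ := hrange.ge (mem_range_self k)
    obtain ⟨hk₁, hk₂⟩ := (hA j₀).subset hj₀.symm
    have hρj : ρ (c (ρ j₀) + (k - a (ρ j₀))) = ρ j₀ := by
      have := hwidth j₀
      exact (hF j₀).symm.subset ⟨by omega, by omega⟩
    refine ⟨c (ρ j₀) + (k - a (ρ j₀)), ?_⟩
    simp only [u, hρj]
    omega

theorem IsRepr.exists_reindexing_comp_eq {γ δ θ : ℤ → ℝ} (hγ : IsRepr γ θ) (hδ : IsRepr δ θ) :
    ∃ u v : ℤ → ℤ, IsReindexing u ∧ IsReindexing v ∧ γ ∘ u = δ ∘ v := by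
  obtain ⟨hγm, hγr, m, hγf⟩ := hγ
  obtain ⟨hδm, hδr, n, hδf⟩ := hδ
  have hN : (0 : ℤ) < n + 1 := by positivity
  obtain ⟨hdm, hds, M, hdf⟩ := isReindexing_ediv hN
  have hρf : HasBoundedFibers (γ ∘ (· / (n + 1 : ℤ))) (m * M) := HasBoundedFibers.comp hγf hdf
  have hcard : ∀ x, {k | δ k = x}.ncard ≤ {j | (γ ∘ (· / (n + 1 : ℤ))) j = x}.ncard := by
    intro x
    by_cases hx : x ∈ range γ
    · obtain ⟨k, hk⟩ := hx
      have hsub : {j : ℤ | j / (n + 1) = k} ⊆ {j | (γ ∘ (· / (n + 1 : ℤ))) j = x} :=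
        fun j hj => by simp [← hk, show j / (n + 1) = k from hj]
      have hfibre : {j : ℤ | j / (n + 1) = k}.ncard = n + 1 := by
        rw [Int.setOf_ediv_eq hN, ← Finset.coe_Ico, Set.ncard_coe_finset, Int.card_Ico]
        omega
      calc {k | δ k = x}.ncard ≤ n := (hδf x).2
        _ ≤ _ := by
          have := Set.ncard_le_ncard hsub (hρf x).1
          omega
    · have hempty : {k | δ k = x} = ∅ := eq_empty_of_forall_notMem fun k hk =>
        hx (by rw [hγr, ← hδr]; exact ⟨k, hk⟩)
      simp [hempty]
  obtain ⟨v, hvm, hvs, hv⟩ := exists_monotone_surjective_comp_eq hδm (hγm.comp hdm)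
    (by rw [range_comp, hds.range_eq, image_univ, hγr, hδr]) (fun x => (hδf x).1)
    (fun x => (hρf x).1) hcard
  exact ⟨_, v, ⟨hdm, hds, M, hdf⟩, ⟨hvm, hvs, m * M, (hv ▸ hρf).of_comp⟩, hv.symm⟩

theorem seqEquiv_triangle_general
    (θ₁ θ₂ θ₃ : ℤ → ℝ) (ε₁ ε₂ : ℝ)
    (h₁₂ : SeqEquiv θ₁ θ₂ ε₁) (h₂₃ : SeqEquiv θ₂ θ₃ ε₂) :
    SeqEquiv θ₁ θ₃ (ε₁ + ε₂) := by
  obtain ⟨γ₁, γ₂, hγ₁, hγ₂, c₁, hc₁, hd₁⟩ := h₁₂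
  obtain ⟨δ₂, δ₃, hδ₂, hδ₃, c₂, hc₂, hd₂⟩ := h₂₃
  obtain ⟨u, v, hu, hv, huv⟩ := hγ₂.exists_reindexing_comp_eq hδ₂
  refine ⟨γ₁ ∘ u, δ₃ ∘ v, hγ₁.comp hu, hδ₃.comp hv, c₁ + c₂, add_lt_add hc₁ hc₂, fun i => ?_⟩
  have hmid : γ₂ (u i) = δ₂ (v i) := congrFun huv i
  calc |γ₁ (u i) - δ₃ (v i)| ≤ |γ₁ (u i) - γ₂ (u i)| + |γ₂ (u i) - δ₃ (v i)| := abs_sub_le _ _ _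
    _ ≤ c₁ + c₂ := add_le_add (hd₁ _) (hmid ▸ hd₂ _)

/-- Lemma 2: the triangle inequality for ε-equivalence of sequences. -/
theorem seqEquiv_triangle
    (θ₁ θ₂ θ₃ : ℤ → ℝ) (ε₁ ε₂ : ℝ)
    (h₁ : InTheta θ₁) (h₂ : InTheta θ₂) (h₃ : InTheta θ₃)
    (h₁₂ : SeqEquiv θ₁ θ₂ ε₁) (h₂₃ : SeqEquiv θ₂ θ₃ ε₂) :
    SeqEquiv θ₁ θ₃ (ε₁ + ε₂) :=
  seqEquiv_triangle_general θ₁ θ₂ θ₃ ε₁ ε₂ h₁₂ h₂₃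
end

section
/- Let φ : ℝ → ℝⁿ be Bohr almost periodic, let θ ∈ Θ be a Wexler sequence with associated identification function β(t) = i for θᵢ ≤ t < θ_{i+1}. Then the composition t ↦ φ(θ_{β(t)}) is a Bohr–Wexler almost periodic function: it is piecewise constant, right-continuous, with discontinuity set contained in {θᵢ}, and for every ε > 0 there is a relatively dense set of ε-translation numbers τ, where τ is an ε-translation number if the shifted function is ε-equivalent to the original in the sense that their discontinuity sequences are ε-equivalent and their values differ by less than ε outside ε-neighborhoods of the discontinuity points. -/
open Filter

def RelDenseR (S : Set ℝ) : Prop := ∃ L : ℝ, 0 < L ∧ ∀ a : ℝ, ∃ τ ∈ S, τ ∈ Set.Icc a (a + L)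

/-- Bohr almost periodic function. -/
def BohrAP {n : ℕ} (φ : ℝ → (Fin n → ℝ)) : Prop :=
  Continuous φ ∧ ∀ ε : ℝ, 0 < ε → RelDenseR {τ : ℝ | ∀ t, ‖φ (t + τ) - φ t‖ < ε}

/-- θ is a Wexler sequence. -/
def Wexler (θ : ℤ → ℝ) : Prop := InTheta θ ∧ ∃ γ : ℤ → ℝ, IsRepr γ θ ∧ EquipAP γ

def FunEquiv {n : ℕ} (u : ℝ → (Fin n → ℝ)) (θu : ℤ → ℝ)
    (v : ℝ → (Fin n → ℝ)) (θv : ℤ → ℝ) (ε : ℝ) : Prop :=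
  SeqEquiv θu θv ε ∧
    ∀ t : ℝ, (∀ i : ℤ, ε ≤ |t - θu i| ∧ ε ≤ |t - θv i|) → ‖u t - v t‖ < ε

/-- Bohr–Wexler almost periodicity of a piecewise continuous right-continuous
function with discontinuity sequence θ: relatively dense ε-translation numbers. -/
def BWAP {n : ℕ} (φ : ℝ → (Fin n → ℝ)) (θ : ℤ → ℝ) : Prop :=
  ∀ ε : ℝ, 0 < ε → RelDenseR
    {τ : ℝ | FunEquiv (fun t => φ (t + τ)) (fun i => θ i - τ) φ θ ε}

section AuxLemmas

lemma bohr_uc {n : ℕ} (φ : ℝ → (Fin n → ℝ)) (hφ : BohrAP φ) (ε : ℝ) (hε : 0 < ε) :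
    ∃ δ : ℝ, 0 < δ ∧ ∀ x y : ℝ, |x - y| ≤ δ → ‖φ x - φ y‖ < ε := by
  obtain ⟨hc, hap⟩ := hφ
  obtain ⟨L, hL, hT⟩ := hap (ε/3) (by linarith)
  have hcomp : IsCompact (Set.Icc (-1 : ℝ) (L + 2)) := isCompact_Icc
  have huc := hcomp.uniformContinuousOn_of_continuous hc.continuousOn
  rw [Metric.uniformContinuousOn_iff] at huc
  obtain ⟨δ', hδ', hmod⟩ := huc (ε/3) (by linarith)
  refine ⟨min (δ'/2) 1, by positivity, ?_⟩
  intro x y hxy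
  obtain ⟨τ, hτ, hτmem⟩ := hT (-y)
  -- y + τ ∈ [0, L]
  have h1 : 0 ≤ y + τ := by have := hτmem.1; linarith
  have h2 : y + τ ≤ L := by have := hτmem.2; linarith
  have hxyd : |x - y| ≤ 1 := le_trans hxy (min_le_right _ _)
  have hymem : y + τ ∈ Set.Icc (-1 : ℝ) (L + 2) := ⟨by linarith, by linarith⟩
  have hxmem : x + τ ∈ Set.Icc (-1 : ℝ) (L + 2) := by
    constructor
    · have := abs_le.mp hxyd; linarith [this.1]
    · have := abs_le.mp hxyd; linarith [this.2]
  have hd : dist (x + τ) (y + τ) < δ' := by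
    rw [Real.dist_eq]
    have : |x + τ - (y + τ)| = |x - y| := by ring_nf
    rw [this]
    have : |x - y| ≤ δ'/2 := le_trans hxy (min_le_left _ _)
    linarith
  have hmid : ‖φ (x + τ) - φ (y + τ)‖ < ε/3 := by
    have := hmod _ hxmem _ hymem hd
    rwa [dist_eq_norm] at this
  have hx : ‖φ (x + τ) - φ x‖ < ε/3 := hτ x
  have hy : ‖φ (y + τ) - φ y‖ < ε/3 := hτ y
  calc ‖φ x - φ y‖ = ‖(φ (x + τ) - φ (y + τ)) - (φ (x + τ) - φ x) + (φ (y + τ) - φ y)‖ := by ring_nf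
    _ ≤ ‖(φ (x + τ) - φ (y + τ)) - (φ (x + τ) - φ x)‖ + ‖φ (y + τ) - φ y‖ := norm_add_le _ _
    _ ≤ ‖φ (x + τ) - φ (y + τ)‖ + ‖φ (x + τ) - φ x‖ + ‖φ (y + τ) - φ y‖ := by
        have := norm_sub_le (φ (x + τ) - φ (y + τ)) (φ (x + τ) - φ x); linarith
    _ < ε := by linarith

section G
variable (γ : ℤ → ℝ)

/-- least index with `s ≤ γ k` -/
lemma exists_nu (hmono : Monotone γ) (htop : ∀ C : ℝ, ∃ k, C ≤ γ k) (hbot : ∀ C : ℝ, ∃ k, γ k ≤ C) (s : ℝ) : ∃ k : ℤ, s ≤ γ k ∧ ∀ m : ℤ, s ≤ γ m → k ≤ m := by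
  obtain ⟨k₀, hk₀⟩ := htop s
  obtain ⟨k₁, hk₁⟩ := hbot (s - 1)
  have hbdd : ∃ b : ℤ, ∀ z : ℤ, s ≤ γ z → b ≤ z := by
    refine ⟨k₁ + 1, fun z hz => ?_⟩
    by_contra h
    push_neg at h
    have : z ≤ k₁ := by omega
    have := hmono this
    linarith
  obtain ⟨lb, hlb, hleast⟩ := Int.exists_least_of_bdd hbdd ⟨k₀, hk₀⟩
  exact ⟨lb, hlb, hleast⟩

/-- uniform bound on γ(k+m) - γ k over k, for fixed m ≥ 0 -/
lemma diff_bound (hap : EquipAP γ) (m : ℤ) : ∃ D : ℝ, 1 ≤ D ∧ ∀ k : ℤ, γ (k + m) - γ k < D := by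
  obtain ⟨N₁, hN₁, hQ₁⟩ := hap 1 one_pos
  have hne : (Finset.Icc (0:ℤ) N₁).Nonempty := ⟨0, by simp; omega⟩
  set M := (Finset.Icc (0:ℤ) N₁).sup' hne (fun l => γ (l + m) - γ l) with hM
  refine ⟨max (M + 1) 1, le_max_right _ _, fun k => ?_⟩
  obtain ⟨q, hq, hqmem⟩ := hQ₁ (-k)
  have hl : k + q ∈ Finset.Icc (0:ℤ) N₁ := by
    simp only [Finset.mem_Icc]
    obtain ⟨h1, h2⟩ := hqmem
    omega
  have h := hq k m
  have hle : γ (k + q + m) - γ (k + q) ≤ M :=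
    Finset.le_sup' (f := fun l => γ (l + m) - γ l) hl
  have habs := abs_lt.mp h
  have : γ (k + m) - γ k < γ (k + m + q) - γ (k + q) + 1 := by linarith [habs.1]
  have he : k + m + q = k + q + m := by ring
  rw [he] at this
  have : γ (k + m) - γ k < M + 1 := by linarith
  exact lt_of_lt_of_le this (le_max_left _ _)

/-- simple almost-period form -/
lemma ap_simple {δ : ℝ} {q : ℤ}
    (hq : ∀ i j : ℤ, |γ (i + j + q) - γ (i + q) - (γ (i + j) - γ i)| < δ) :
    ∀ k : ℤ, |γ (k + q) - γ k - (γ q - γ 0)| < δ := by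
  intro k
  have h := hq 0 k
  simp only [zero_add] at h
  have h2 : |γ (k + q) - γ k - (γ q - γ 0)| = |γ (k + q) - γ q - (γ k - γ 0)| := by ring_nf
  rw [h2]
  exact h

/-- relatively dense displacements: for every a there is q with τ_q = γ q - γ 0 in [a, a+L]
and q a δ-almost period (simple form). -/
lemma displacements_dense (hmono : Monotone γ) (htop : ∀ C : ℝ, ∃ k, C ≤ γ k) (hbot : ∀ C : ℝ, ∃ k, γ k ≤ C) (hap : EquipAP γ) (δ : ℝ) (hδ : 0 < δ) :
    ∃ L : ℝ, 0 < L ∧ ∀ a : ℝ, ∃ q : ℤ,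
      (∀ k : ℤ, |γ (k + q) - γ k - (γ q - γ 0)| < δ) ∧ γ q - γ 0 ∈ Set.Icc a (a + L) := by
  obtain ⟨N, hN, hQ⟩ := hap δ hδ
  obtain ⟨D, hD1, hD⟩ := diff_bound γ hap (N + 1)
  refine ⟨D, by linarith, fun a => ?_⟩
  obtain ⟨b, hb, hbleast⟩ := exists_nu γ hmono htop hbot (a + γ 0)
  obtain ⟨q, hq, hqmem⟩ := hQ b
  refine ⟨q, ap_simple γ hq, ?_, ?_⟩
  · have : γ b ≤ γ q := hmono hqmem.1
    linarith
  · have h1 : γ q ≤ γ (b + N) := hmono hqmem.2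
    have h2 : γ (b - 1 + (N + 1)) - γ (b - 1) < D := hD (b - 1)
    have h3 : γ (b - 1) < a + γ 0 := by
      by_contra h
      push_neg at h
      have := hbleast (b - 1) h
      omega
    have he : b - 1 + (N + 1) = b + N := by ring
    rw [he] at h2
    linarith
end G

lemma phi_net {n : ℕ} (φ : ℝ → (Fin n → ℝ)) (hφ : BohrAP φ) (δ : ℝ) (hδ : 0 < δ) :
    ∃ F : Finset ℝ, ∀ s : ℝ, ∃ r ∈ F, ∀ t : ℝ, ‖φ (t + s) - φ (t + r)‖ ≤ δ := by
  obtain ⟨L, hL, hT⟩ := hφ.2 (δ/2) (by linarith)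
  obtain ⟨η, hη, hmod⟩ := bohr_uc φ hφ (δ/2) (by linarith)
  set m := ⌈L / η⌉₊ with hm
  refine ⟨(Finset.range (m + 1)).image (fun j : ℕ => (j : ℝ) * η), fun s => ?_⟩
  obtain ⟨τ, hτ, hτmem⟩ := hT (-s)
  set u := s + τ with hu
  have hu0 : 0 ≤ u := by have := hτmem.1; simp [hu]; linarith
  have huL : u ≤ L := by have := hτmem.2; simp [hu]; linarith
  set j := ⌊u / η⌋₊ with hj
  have hjm : j ≤ m := by
    have h1 : u / η ≤ L / η := by gcongr
    calc j ≤ ⌊L / η⌋₊ := Nat.floor_le_floor h1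
      _ ≤ m := Nat.floor_le_ceil _
  refine ⟨(j : ℝ) * η, Finset.mem_image.mpr ⟨j, Finset.mem_range.mpr (by omega), rfl⟩, ?_⟩
  have hjle : (j : ℝ) * η ≤ u := by
    have := Nat.floor_le (a := u / η) (by positivity)
    calc (j:ℝ) * η ≤ (u / η) * η := by
          apply mul_le_mul_of_nonneg_right this (le_of_lt hη)
      _ = u := by field_simp
  have hjgt : u < ((j : ℝ) + 1) * η := by
    have := Nat.lt_floor_add_one (u / η)
    calc u = (u / η) * η := by field_simp
      _ < ((j:ℝ) + 1) * η := by
          apply mul_lt_mul_of_pos_right this hη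
  intro t
  have h1 : ‖φ (t + s + τ) - φ (t + s)‖ < δ/2 := hτ (t + s)
  have h2 : ‖φ (t + u) - φ (t + (j : ℝ) * η)‖ < δ/2 := by
    apply hmod
    have : |t + u - (t + (j:ℝ) * η)| = |u - (j:ℝ)*η| := by ring_nf
    rw [this, abs_of_nonneg (by linarith)]
    nlinarith
  have he : t + s + τ = t + u := by simp [hu]; ring
  rw [he] at h1
  calc ‖φ (t + s) - φ (t + (j:ℝ)*η)‖
      ≤ ‖φ (t + s) - φ (t + u)‖ + ‖φ (t + u) - φ (t + (j:ℝ)*η)‖ := by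
        have := norm_sub_le_norm_sub_add_norm_sub (φ (t+s)) (φ (t+u)) (φ (t + (j:ℝ)*η))
        exact this
    _ ≤ δ := by rw [norm_sub_rev] at h1; linarith

lemma O_net (γ : ℤ → ℝ) (hmono : Monotone γ) (htop : ∀ C : ℝ, ∃ k, C ≤ γ k)
    (hbot : ∀ C : ℝ, ∃ k, γ k ≤ C) (hap : EquipAP γ)
    (ν : ℝ → ℤ) (hν : ∀ s : ℝ, s ≤ γ (ν s) ∧ ∀ m : ℤ, s ≤ γ m → ν s ≤ m)
    (δ : ℝ) (hδ : 0 < δ) :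
    ∃ P : Finset (ℤ × ℝ), ∀ s : ℝ, ∃ p ∈ P, ∀ i : ℤ,
      |γ (ν s + i) - s - (γ (p.1 + i) - p.2)| ≤ δ := by
  have hδ2 : 0 < δ/2 := by linarith
  obtain ⟨L, hL, hdisp⟩ := displacements_dense γ hmono htop hbot hap (δ/2) hδ2
  obtain ⟨k₁, hk₁⟩ := hbot (-(δ/2) - 1)
  obtain ⟨k₂, hk₂⟩ := htop (L + δ/2)
  set m₉ := ⌈L / (δ/2)⌉₊ with hm₉
  refine ⟨(Finset.Icc (k₁ + 1) k₂) ×ˢ ((Finset.range (m₉ + 1)).image (fun j : ℕ => (j : ℝ) * (δ/2))),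
    fun s => ?_⟩
  obtain ⟨q, hq, hτmem⟩ := hdisp (s - L)
  set τq := γ q - γ 0 with hτq
  set st := s - τq with hst
  have hst0 : 0 ≤ st := by have := hτmem.2; simp [hst]; linarith
  have hstL : st ≤ L := by have := hτmem.1; simp [hst]; linarith
  set k := ν s - q with hk
  have hν1 : s ≤ γ (ν s) := (hν s).1
  have hν2 : γ (ν s - 1) < s := by
    by_contra h
    push_neg at h
    have := (hν s).2 _ h
    omega
  have hkq : k + q = ν s := by omega
  have hgk : st - δ/2 < γ k := by
    have h := hq k
    rw [hkq] at h
    have := abs_lt.mp h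
    simp only [hst]
    linarith [this.2]
  have hgk1 : γ (k - 1) < st + δ/2 := by
    have h := hq (k - 1)
    have he : k - 1 + q = ν s - 1 := by omega
    rw [he] at h
    have := abs_lt.mp h
    simp only [hst]
    linarith [this.1]
  have hkmem : k ∈ Finset.Icc (k₁ + 1) k₂ := by
    simp only [Finset.mem_Icc]
    constructor
    · by_contra h
      push_neg at h
      have : k ≤ k₁ := by omega
      have := hmono this
      linarith
    · by_contra h
      push_neg at h
      have : k₂ ≤ k - 1 := by omega
      have := hmono this
      linarith
  set j := ⌊st / (δ/2)⌋₊ with hj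
  have hjm : j ≤ m₉ := by
    have h1 : st / (δ/2) ≤ L / (δ/2) := by gcongr
    calc j ≤ ⌊L / (δ/2)⌋₊ := Nat.floor_le_floor h1
      _ ≤ m₉ := Nat.floor_le_ceil _
  set v := (j : ℝ) * (δ/2) with hv
  have hvle : v ≤ st := by
    have := Nat.floor_le (a := st / (δ/2)) (by positivity)
    calc v ≤ (st / (δ/2)) * (δ/2) := by
          apply mul_le_mul_of_nonneg_right this (le_of_lt hδ2)
      _ = st := by field_simp
  have hvgt : st < v + δ/2 := by
    have := Nat.lt_floor_add_one (st / (δ/2))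
    have h2 : st / (δ/2) * (δ/2) < ((j:ℝ) + 1) * (δ/2) := mul_lt_mul_of_pos_right this hδ2
    have h3 : st / (δ/2) * (δ/2) = st := by field_simp
    simp only [hv]
    nlinarith
  refine ⟨(k, v), Finset.mem_product.mpr ⟨hkmem,
    Finset.mem_image.mpr ⟨j, Finset.mem_range.mpr (by omega), rfl⟩⟩, fun i => ?_⟩
  have h := hq (k + i)
  have he : k + i + q = ν s + i := by omega
  rw [he] at h
  have habs := abs_lt.mp h
  rw [abs_le]
  constructor
  · linarith [habs.1, hvgt]
  · linarith [habs.2, hvle]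

lemma S_dense {n : ℕ} (φ : ℝ → (Fin n → ℝ)) (hφ : BohrAP φ)
    (γ : ℤ → ℝ) (hmono : Monotone γ) (htop : ∀ C : ℝ, ∃ k, C ≤ γ k)
    (hbot : ∀ C : ℝ, ∃ k, γ k ≤ C) (hap : EquipAP γ)
    (ν : ℝ → ℤ) (hν : ∀ s : ℝ, s ≤ γ (ν s) ∧ ∀ m : ℤ, s ≤ γ m → ν s ≤ m)
    (ε : ℝ) (hε : 0 < ε) :
    RelDenseR {τ : ℝ | (∀ t : ℝ, ‖φ (t + τ) - φ t‖ < ε) ∧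
      ∃ q : ℤ, ∀ k : ℤ, |γ (k + q) - γ k - τ| < ε} := by
  set S := {τ : ℝ | (∀ t : ℝ, ‖φ (t + τ) - φ t‖ < ε) ∧
      ∃ q : ℤ, ∀ k : ℤ, |γ (k + q) - γ k - τ| < ε} with hS
  by_contra hcon
  rw [RelDenseR] at hcon
  push_neg at hcon
  have hbad : ∀ L : ℝ, ∃ a : ℝ, ∀ τ, τ ∈ S → τ ∉ Set.Icc a (a + (max L 0 + 1)) := by
    intro L
    obtain ⟨a, ha⟩ := hcon (max L 0 + 1) (by positivity)
    exact ⟨a, ha⟩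
  choose A hA using hbad
  -- recursive construction of points with pairwise differences in bad intervals
  set g : ℕ → ℝ × ℝ := fun nn => Nat.rec ((0:ℝ), (0:ℝ))
    (fun _ p => (A (2*p.2+2) + p.2 + 1, max p.2 |A (2*p.2+2) + p.2 + 1|)) nn with hg
  set sq : ℕ → ℝ := fun nn => (g nn).1 with hsq
  set B : ℕ → ℝ := fun nn => (g nn).2 with hB
  have hgsucc : ∀ m : ℕ, g (m+1) = (A (2*(B m)+2) + B m + 1, max (B m) |A (2*(B m)+2) + B m + 1|) := by
    intro m; rfl
  have hBmono : Monotone B := by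
    apply monotone_nat_of_le_succ
    intro m
    have : B (m+1) = max (B m) |A (2*(B m)+2) + B m + 1| := by
      simp only [hB, hgsucc m]
    rw [this]
    exact le_max_left _ _
  have hB0 : B 0 = 0 := rfl
  have hBnonneg : ∀ m, 0 ≤ B m := fun m => hB0 ▸ hBmono (Nat.zero_le m)
  have hsB : ∀ m, |sq m| ≤ B m := by
    intro m
    cases m with
    | zero =>
      simp only [hsq, hB, show g 0 = ((0:ℝ),(0:ℝ)) from rfl]
      norm_num
    | succ m =>
      have h1 : sq (m+1) = A (2*(B m)+2) + B m + 1 := by simp only [hsq, hgsucc m]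
      have h2 : B (m+1) = max (B m) |A (2*(B m)+2) + B m + 1| := by simp only [hB, hgsucc m]
      rw [h1, h2]
      exact le_max_right _ _
  have hbadpair : ∀ i j : ℕ, i < j → (sq j - sq i) ∉ S := by
    intro i j hij
    obtain ⟨m, rfl⟩ : ∃ m, j = m + 1 := ⟨j - 1, by omega⟩
    have him : i ≤ m := by omega
    have hBi : B i ≤ B m := hBmono him
    have hsi := hsB i
    have habs := abs_le.mp hsi
    have h1 : sq (m+1) = A (2*(B m)+2) + B m + 1 := by simp only [hsq, hgsucc m]
    have hmax : max (2*(B m)+2) 0 = 2*(B m)+2 := max_eq_left (by linarith [hBnonneg m])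
    intro hmem
    apply hA (2*(B m)+2) _ hmem
    rw [hmax, h1]
    constructor
    · linarith [habs.2]
    · linarith [habs.1]
  -- nets
  have hδ : (0:ℝ) < ε/3 := by linarith
  obtain ⟨F, hF⟩ := phi_net φ hφ (ε/3) hδ
  obtain ⟨P, hP⟩ := O_net γ hmono htop hbot hap ν hν (ε/3) hδ
  choose r hrF hr using hF
  choose p hpP hp using hP
  set f : ℕ → ℝ × (ℤ × ℝ) := fun m => (r (sq m), p (sq m)) with hf
  have hmaps : ∀ m ∈ Finset.range ((F ×ˢ P).card + 1), f m ∈ F ×ˢ P := by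
    intro m _
    exact Finset.mem_product.mpr ⟨hrF _, hpP _⟩
  obtain ⟨x, hx, y, hy, hxy, hfeq⟩ :=
    Finset.exists_ne_map_eq_of_card_lt_of_maps_to (by simp) hmaps
  have key : ∀ u v : ℕ, u < v → f u = f v → False := by
    intro u v huv hfe
    have hre : r (sq u) = r (sq v) := congrArg Prod.fst hfe
    have hpe : p (sq u) = p (sq v) := congrArg Prod.snd hfe
    apply hbadpair u v huv
    constructor
    · intro t
      have h1 := hr (sq v) (t - sq u)
      have h2 := hr (sq u) (t - sq u)
      rw [← hre] at h1
      have e1 : t - sq u + sq v = t + (sq v - sq u) := by ring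
      have e2 : t - sq u + sq u = t := by ring
      rw [e1] at h1
      rw [e2] at h2
      calc ‖φ (t + (sq v - sq u)) - φ t‖
          ≤ ‖φ (t + (sq v - sq u)) - φ (t - sq u + r (sq u))‖ +
            ‖φ (t - sq u + r (sq u)) - φ t‖ := norm_sub_le_norm_sub_add_norm_sub _ _ _
        _ < ε := by rw [norm_sub_rev] at h2; linarith
    · refine ⟨ν (sq v) - ν (sq u), fun k => ?_⟩
      have h1 := hp (sq v) (k - ν (sq u))
      have h2 := hp (sq u) (k - ν (sq u))
      rw [← hpe] at h1
      have e1 : ν (sq v) + (k - ν (sq u)) = k + (ν (sq v) - ν (sq u)) := by ring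
      have e2 : ν (sq u) + (k - ν (sq u)) = k := by ring
      rw [e1] at h1
      rw [e2] at h2
      have habs1 := abs_le.mp h1
      have habs2 := abs_le.mp h2
      rw [abs_lt]
      constructor
      · linarith [habs1.1, habs2.2]
      · linarith [habs1.2, habs2.1]
  rcases hxy.lt_or_gt with hlt | hlt
  · exact key x y hlt hfeq
  · exact key y x hlt hfeq.symm

end AuxLemmas

/-- Lemma on compositions: if φ is Bohr almost periodic and θ is a
Wexler sequence, then t ↦ φ(θ_{β(t)}) is Bohr–Wexler almost periodic (piecewise
constant, right-continuous, with discontinuities among the θᵢ). -/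
theorem composition_is_BWAP
    (n : ℕ) (φ : ℝ → (Fin n → ℝ)) (hφ : BohrAP φ)
    (θ : ℤ → ℝ) (hθ : Wexler θ)
    (β : ℝ → ℤ) (hβ : ∀ t : ℝ, θ (β t) ≤ t ∧ t < θ (β t + 1)) :
    (∀ i : ℤ, ∀ t ∈ Set.Ico (θ i) (θ (i + 1)), φ (θ (β t)) = φ (θ i)) ∧
    (∀ t : ℝ, ContinuousWithinAt (fun s => φ (θ (β s))) (Set.Ici t) t) ∧
    BWAP (fun t => φ (θ (β t))) θ := by
  obtain ⟨⟨hθm, hθtop, hθbot⟩, γ, ⟨hγm, hγr, m₀, hγfib⟩, hγap⟩ := hθ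
  -- β is determined
  have hbeta : ∀ (i : ℤ) (t : ℝ), θ i ≤ t → t < θ (i + 1) → β t = i := by
    intro i t h1 h2
    have h := hβ t
    by_contra hne
    rcases lt_or_gt_of_ne hne with hlt | hlt
    · have : β t + 1 ≤ i := by omega
      have := hθm.monotone this
      linarith [h.2]
    · have : i + 1 ≤ β t := by omega
      have := hθm.monotone this
      linarith [h.1]
  have htop : ∀ C : ℝ, ∃ k, C ≤ γ k := by
    intro C
    obtain ⟨m, hm⟩ := (hθtop.eventually_ge_atTop C).exists
    have : θ m ∈ Set.range γ := hγr ▸ Set.mem_range_self m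
    obtain ⟨k, hk⟩ := this
    exact ⟨k, hk ▸ hm⟩
  have hbot : ∀ C : ℝ, ∃ k, γ k ≤ C := by
    intro C
    obtain ⟨m, hm⟩ := (hθbot.eventually_le_atBot C).exists
    have : θ m ∈ Set.range γ := hγr ▸ Set.mem_range_self m
    obtain ⟨k, hk⟩ := this
    exact ⟨k, hk ▸ hm⟩
  refine ⟨?_, ?_, ?_⟩
  · -- piecewise constant
    intro i t ht
    rw [hbeta i t ht.1 ht.2]
  · -- right continuity
    intro t
    have hk := hβ t
    have hmem : Set.Ico t (θ (β t + 1)) ∈ nhdsWithin t (Set.Ici t) := by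
      rw [show Set.Ico t (θ (β t + 1)) = Set.Ici t ∩ Set.Iio (θ (β t + 1)) from rfl]
      exact Filter.inter_mem self_mem_nhdsWithin
        (mem_nhdsWithin_of_mem_nhds (isOpen_Iio.mem_nhds hk.2))
    have heq : (fun s => φ (θ (β s))) =ᶠ[nhdsWithin t (Set.Ici t)]
        (fun _ => φ (θ (β t))) := by
      filter_upwards [hmem] with s hs
      rw [hbeta (β t) s (le_trans hk.1 hs.1) hs.2]
    exact (Filter.Tendsto.congr' heq.symm tendsto_const_nhds : _)
  · -- BWAP
    intro ε hε
    obtain ⟨δuc, hδuc, huc⟩ := bohr_uc φ hφ (ε/2) (by linarith)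
    set ε' := min δuc (ε/2) with hε'def
    have hε' : 0 < ε' := lt_min hδuc (by linarith)
    have hε'le : ε' ≤ ε/2 := min_le_right _ _
    have hε'uc : ε' ≤ δuc := min_le_left _ _
    have hexν := fun s => exists_nu γ hγm htop hbot s
    choose ν hν1 hν2 using hexν
    obtain ⟨L, hL, hSd⟩ := S_dense φ hφ γ hγm htop hbot hγap ν
      (fun s => ⟨hν1 s, hν2 s⟩) ε' hε'
    refine ⟨L, hL, fun a => ?_⟩
    obtain ⟨τ, ⟨hτφ, q, hτq⟩, hτmem⟩ := hSd a
    refine ⟨τ, ⟨?_, ?_⟩, hτmem⟩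
    · -- SeqEquiv
      refine ⟨fun i => γ (i + q) - τ, γ, ⟨?_, ?_, ?_⟩, ⟨hγm, hγr, m₀, hγfib⟩,
        ε', by linarith, fun i => le_of_lt ?_⟩
      · intro a b hab
        have : a + q ≤ b + q := by omega
        have := hγm this
        simp only
        linarith
      · ext x
        simp only [Set.mem_range]
        constructor
        · rintro ⟨i, hi⟩
          have hx : γ (i + q) = x + τ := by linarith
          have : x + τ ∈ Set.range θ := hγr ▸ (hx ▸ Set.mem_range_self (i + q))
          obtain ⟨m, hm⟩ := this
          exact ⟨m, by linarith⟩
        · rintro ⟨m, hm⟩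
          have : x + τ ∈ Set.range γ := hγr.symm ▸ ⟨m, by linarith⟩
          obtain ⟨i, hi⟩ := this
          exact ⟨i - q, by rw [sub_add_cancel, hi]; ring⟩
      · refine ⟨m₀, fun x => ?_⟩
        have h := hγfib (x + τ)
        have hset : {k : ℤ | γ (k + q) - τ = x} = (fun m => m - q) '' {k : ℤ | γ k = x + τ} := by
          ext k
          simp only [Set.mem_setOf_eq, Set.mem_image]
          constructor
          · intro hk
            exact ⟨k + q, by linarith, by omega⟩
          · rintro ⟨m, hm, rfl⟩
            rw [sub_add_cancel, hm]
            ring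
        rw [hset]
        refine ⟨h.1.image _, ?_⟩
        rw [Set.ncard_image_of_injective _ (fun a b hab => by omega)]
        exact h.2
      · have := hτq i
        have he : γ (i + q) - τ - γ i = γ (i + q) - γ i - τ := by ring
        rw [he]
        exact this
    · -- value closeness
      intro t hfar
      simp only
      have hk := hβ t
      have hk' := hβ (t + τ)
      set k := β t with hkdef
      set k' := β (t + τ) with hk'def
      have hf1 := (hfar k).2
      have hf2 := (hfar (k + 1)).2
      have hf3 := (hfar k').1
      have hf4 := (hfar (k' + 1)).1
      have h1 : θ k + ε ≤ t := by
        rw [abs_of_nonneg (by linarith [hk.1])] at hf1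
        linarith
      have h2 : t + ε ≤ θ (k + 1) := by
        rw [abs_of_nonpos (by linarith [hk.2])] at hf2
        linarith
      have h3 : θ k' + ε ≤ t + τ := by
        have he : t - (θ k' - τ) = t + τ - θ k' := by ring
        rw [he, abs_of_nonneg (by linarith [hk'.1])] at hf3
        linarith
      have h4 : t + τ + ε ≤ θ (k' + 1) := by
        have he : t - (θ (k' + 1) - τ) = t + τ - θ (k' + 1) := by ring
        rw [he, abs_of_nonpos (by linarith [hk'.2])] at hf4
        linarith
      -- (a) lower bound for θ k'
      have hlo : θ k + τ - ε' ≤ θ k' := by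
        have : θ k ∈ Set.range γ := hγr.symm ▸ Set.mem_range_self k
        obtain ⟨i₀, hi₀⟩ := this
        have hq0 := abs_lt.mp (hτq i₀)
        have : γ (i₀ + q) ∈ Set.range θ := hγr ▸ Set.mem_range_self (i₀ + q)
        obtain ⟨m, hm⟩ := this
        have hmle : θ m ≤ t + τ := by
          rw [hm]
          rw [hi₀] at hq0
          have : ε' ≤ ε := by linarith
          linarith [hq0.2]
        have : m ≤ k' := by
          by_contra hcon
          push_neg at hcon
          have : k' + 1 ≤ m := by omega
          have := hθm.monotone this
          linarith
        have h5 := hθm.monotone this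
        linarith [hq0.1, hm, hi₀]
      -- (b) upper bound for θ k'
      have hhi : θ k' ≤ θ k + τ + ε' := by
        by_contra hcon
        push_neg at hcon
        have : θ k' ∈ Set.range γ := hγr.symm ▸ Set.mem_range_self k'
        obtain ⟨i₁, hi₁⟩ := this
        have hq1 := abs_lt.mp (hτq (i₁ - q))
        rw [sub_add_cancel, hi₁] at hq1
        have hw1 : θ k < γ (i₁ - q) := by linarith [hq1.2]
        have hw2 : γ (i₁ - q) < t := by
          have : ε' ≤ ε := by linarith
          linarith [hq1.1]
        have : γ (i₁ - q) ∈ Set.range θ := hγr ▸ Set.mem_range_self (i₁ - q)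
        obtain ⟨p, hp⟩ := this
        have hple : p ≤ k := by
          by_contra hcon2
          push_neg at hcon2
          have : k + 1 ≤ p := by omega
          have := hθm.monotone this
          linarith [hk.2, hp]
        have := hθm.monotone hple
        linarith [hp, hw1]
      -- conclude
      have hA : ‖φ (θ k') - φ (θ k' - τ)‖ < ε' := by
        have := hτφ (θ k' - τ)
        rw [show θ k' - τ + τ = θ k' from by ring] at this
        exact this
      have hB : ‖φ (θ k' - τ) - φ (θ k)‖ < ε/2 := by
        apply huc
        rw [abs_le]
        constructor
        · linarith
        · linarith
      calc ‖φ (θ k') - φ (θ k)‖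
          ≤ ‖φ (θ k') - φ (θ k' - τ)‖ + ‖φ (θ k' - τ) - φ (θ k)‖ :=
            norm_sub_le_norm_sub_add_norm_sub _ _ _
        _ < ε := by linarith
end

section
/- Let a : ℝ → ℝ be Bohr almost periodic with positive mean value M(a) = lim_{T→∞} (1/(2T)) ∫_{−T}^{T} a(s) ds > 0. Then there exist constants K ≥ 1 and σ > 0 such that exp(∫_s^t a(u) du) ≤ K exp(σ(t−s)) for all t ≤ s. -/
open Filter MeasureTheory intervalIntegral

def BohrAPR (a : ℝ → ℝ) : Prop :=
  Continuous a ∧ ∀ ε : ℝ, 0 < ε → RelDenseR {τ : ℝ | ∀ t, |a (t + τ) - a t| < ε}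

/-!
Every window of length `L` contains an `ε`-almost period `τ` of `a`, and a suitable one moves
`[t, t + 2T]` to within distance `L` of `[-T, T]`. Hence, with `C = sup |a|`,
`∫_t^{t+2T} a ≥ ∫_{-T}^{T} a - 2Tε - 2CL`. Since `∫_{-T}^{T} a ≈ 2TM`, the choice `ε = M/4`
and `T` large gives `δ > 0` with `∫_t^{t+2T} a ≥ δ` for every `t`; cutting `[t, s]` into blocks
of length `2T` then gives `∫_t^s a ≥ δ (s - t) / (2T) - const`, which exponentiates to the claim.
-/

section IntervalIntegral

variable {a : ℝ → ℝ} {C : ℝ}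

theorem abs_intervalIntegral_le (hC : ∀ u, |a u| ≤ C) (x y : ℝ) :
    |∫ u in x..y, a u| ≤ C * |y - x| := by
  simpa only [Real.norm_eq_abs] using
    intervalIntegral.norm_integral_le_of_norm_le_const fun u _ =>
      (Real.norm_eq_abs (a u)).trans_le (hC u)

theorem abs_intervalIntegral_sub_intervalIntegral_le (hcont : Continuous a)
    (hC : ∀ u, |a u| ≤ C) (x y x' y' : ℝ) :
    |(∫ u in x'..y', a u) - ∫ u in x..y, a u| ≤ C * (|x - x'| + |y - y'|) := by
  rw [integral_interval_sub_interval_comm (hcont.intervalIntegrable _ _)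
    (hcont.intervalIntegrable _ _) (hcont.intervalIntegrable _ _), mul_add]
  exact (abs_sub _ _).trans
    (add_le_add (abs_intervalIntegral_le hC _ _) (abs_intervalIntegral_le hC _ _))

theorem abs_intervalIntegral_add_sub_le_of_almostPeriod (hcont : Continuous a) {ε τ : ℝ}
    (hτ : ∀ t, |a (t + τ) - a t| ≤ ε) (x y : ℝ) :
    |(∫ u in (x + τ)..(y + τ), a u) - ∫ u in x..y, a u| ≤ ε * |y - x| := by
  have hshift : Continuous fun u => a (u + τ) := hcont.comp (continuous_add_const τ)
  rw [← integral_comp_add_right, ← integral_sub (hshift.intervalIntegrable x y)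
    (hcont.intervalIntegrable x y)]
  exact abs_intervalIntegral_le hτ x y

theorem nat_mul_le_intervalIntegral_of_forall_le (hcont : Continuous a) {P δ : ℝ}
    (hblock : ∀ t, δ ≤ ∫ u in t..t + P, a u) (n : ℕ) (t : ℝ) :
    n * δ ≤ ∫ u in t..t + n * P, a u := by
  induction n with
  | zero => simp
  | succ n ih =>
    rw [← integral_add_adjacent_intervals (hcont.intervalIntegrable t (t + n * P))
      (hcont.intervalIntegrable _ _)]
    have hlast := hblock (t + n * P)
    rw [add_assoc, ← add_one_mul] at hlast
    push_cast
    linarith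

theorem linear_le_intervalIntegral_of_forall_le (hcont : Continuous a) (hC : ∀ u, |a u| ≤ C)
    {P δ : ℝ} (hP : 0 < P) (hδ : 0 ≤ δ) (hblock : ∀ t, δ ≤ ∫ u in t..t + P, a u)
    {t s : ℝ} (hts : t ≤ s) :
    δ / P * (s - t) - (δ + C * P) ≤ ∫ u in t..s, a u := by
  set n := ⌊(s - t) / P⌋₊
  have hn : (n : ℝ) * P ≤ s - t := (le_div_iff₀ hP).1 (Nat.floor_le (by positivity))
  have hn' : s - t < (n + 1) * P := (div_lt_iff₀ hP).1 (Nat.lt_floor_add_one _)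
  have hblocks := nat_mul_le_intervalIntegral_of_forall_le hcont hblock n t
  have htail : |∫ u in (t + n * P)..s, a u| ≤ C * P := by
    refine (abs_intervalIntegral_le hC _ _).trans (mul_le_mul_of_nonneg_left ?_
      ((abs_nonneg _).trans (hC 0)))
    rw [abs_le]
    constructor <;> linarith
  have hcount : δ / P * (s - t) - δ ≤ n * δ := by
    rw [div_mul_eq_mul_div, div_sub' hP.ne', div_le_iff₀ hP]
    nlinarith
  rw [← integral_add_adjacent_intervals (hcont.intervalIntegrable t (t + n * P))
    (hcont.intervalIntegrable _ s)]
  linarith [(abs_le.1 htail).1]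

end IntervalIntegral

namespace BohrAPR

variable {a : ℝ → ℝ}

theorem exists_abs_le (ha : BohrAPR a) : ∃ C, ∀ u, |a u| ≤ C := by
  obtain ⟨L, hL, hdense⟩ := ha.2 1 one_pos
  obtain ⟨x, -, hx⟩ := isCompact_Icc.exists_isMaxOn (Set.nonempty_Icc.2 hL.le)
    (continuous_abs.comp ha.1).continuousOn
  refine ⟨|a x| + 1, fun u => ?_⟩
  obtain ⟨τ, hτ, hτmem⟩ := hdense (-u)
  have hmax : |a (u + τ)| ≤ |a x| := hx (by constructor <;> linarith [hτmem.1, hτmem.2])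
  have htri := abs_sub_abs_le_abs_sub (a u) (a (u + τ))
  linarith [abs_sub_comm (a u) (a (u + τ)), (hτ u).le]

theorem exists_forall_pos_le_intervalIntegral (ha : BohrAPR a) {M : ℝ} (hM : 0 < M)
    (hmean : Tendsto (fun T : ℝ => (1 / (2 * T)) * ∫ s in (-T)..T, a s) atTop (nhds M)) :
    ∃ P > 0, ∃ δ > 0, ∀ t, δ ≤ ∫ u in t..t + P, a u := by
  obtain ⟨C, hC⟩ := ha.exists_abs_le
  obtain ⟨L, hL, hdense⟩ := ha.2 (M / 4) (by positivity)
  obtain ⟨T, hT, hTmean, hTL⟩ := ((eventually_gt_atTop 0).and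
    ((hmean.eventually (eventually_gt_nhds (by linarith : 3 * M / 4 < M))).and
    (eventually_ge_atTop (4 * C * L / M)))).exists
  have hcentral : 3 * M / 4 * (2 * T) < ∫ s in (-T)..T, a s := by
    rwa [one_div_mul_eq_div, lt_div_iff₀ (by positivity)] at hTmean
  have hCL : 2 * (C * L) ≤ M * T / 2 := by
    rw [div_le_iff₀ hM] at hTL
    linarith
  refine ⟨2 * T, by positivity, M * T / 2, by positivity, fun t => ?_⟩
  obtain ⟨τ, hτ, hτmem⟩ := hdense (-T - t)
  have hshift := abs_intervalIntegral_add_sub_le_of_almostPeriod ha.1 (fun u => (hτ u).le)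
    t (t + 2 * T)
  have hmove := abs_intervalIntegral_sub_intervalIntegral_le ha.1 hC (t + τ) (t + 2 * T + τ)
    (-T) T
  have hdist : |t + τ - -T| + |t + 2 * T + τ - T| ≤ 2 * L := by
    have h : |t + τ - -T| ≤ L := abs_le.2 ⟨by linarith [hτmem.1], by linarith [hτmem.2]⟩
    rw [show t + 2 * T + τ - T = t + τ - -T by ring]
    linarith
  have hlen : |t + 2 * T - t| = 2 * T := by
    rw [add_sub_cancel_left, abs_of_pos (by positivity)]
  rw [hlen] at hshift
  have hmove' := hmove.trans (mul_le_mul_of_nonneg_left hdist ((abs_nonneg _).trans (hC 0)))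
  linarith [(abs_le.1 hshift).2, (abs_le.1 hmove').2]

end BohrAPR

/-- if a is Bohr almost periodic with positive mean value, then
exp(∫_s^t a(u)du) ≤ K exp(σ(t−s)) for all t ≤ s, for some K ≥ 1, σ > 0. -/
theorem exp_integral_bound_of_positive_mean
    (a : ℝ → ℝ) (ha : BohrAPR a) (M : ℝ) (hM : 0 < M)
    (hmean : Tendsto (fun T : ℝ => (1 / (2 * T)) * ∫ s in (-T)..T, a s) atTop (nhds M)) :
    ∃ K : ℝ, 1 ≤ K ∧ ∃ σ : ℝ, 0 < σ ∧ ∀ t s : ℝ, t ≤ s →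
      Real.exp (∫ u in s..t, a u) ≤ K * Real.exp (σ * (t - s)) := by
  obtain ⟨C, hC⟩ := ha.exists_abs_le
  obtain ⟨P, hP, δ, hδ, hblock⟩ := ha.exists_forall_pos_le_intervalIntegral hM hmean
  have hC0 : 0 ≤ C := (abs_nonneg _).trans (hC 0)
  refine ⟨Real.exp (δ + C * P), Real.one_le_exp (by positivity), δ / P, by positivity,
    fun t s hts => ?_⟩
  have hlower := linear_le_intervalIntegral_of_forall_le ha.1 hC hP hδ.le hblock hts
  rw [integral_symm, ← Real.exp_add]
  exact Real.exp_le_exp.2 (by linarith)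
end

section
/- Let φ : ℝ → ℝⁿ be a piecewise continuous right-continuous function with discontinuity sequence θ ∈ Θ, uniformly continuous on ⋃ᵢ(θᵢ, θ_{i+1}). If for every sequence (h'ₙ) of reals there is a subsequence (hₙ) such that φ(· + hₙ) converges in B-topology (i.e., for every ε > 0, eventually φ(· + hₙ) is ε-equivalent to a fixed limit function in PC_r), then φ is Bohr–Wexler almost periodic: for every ε > 0 the set of ε-translation numbers of φ is relatively dense. -/
open Filter

/- ### auxiliary lemmas -/

lemma strictMono_int_diff_le {a : ℤ → ℤ} (h : StrictMono a) :
    ∀ j j' : ℤ, j ≤ j' → j' - j ≤ a j' - a j := by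
  intro j j' hle
  have key : ∀ d : ℕ, (d : ℤ) ≤ a (j + d) - a j := by
    intro d
    induction d with
    | zero => simp
    | succ m ih =>
        have h1 : a (j + m) < a (j + m + 1) := h (lt_add_one _)
        have : ((m + 1 : ℕ) : ℤ) = (m : ℤ) + 1 := by push_cast; ring
        rw [this, show j + ((m : ℤ) + 1) = j + m + 1 by ring]
        omega
  have hd : j' = j + ((j' - j).toNat : ℤ) := by omega
  have := key (j' - j).toNat
  rw [← hd] at this
  omega

lemma exists_base {f : ℤ → ℤ} (hf : Monotone f) (hsurj : Function.Surjective f)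
    (hfin : ∀ j, {k | f k = j}.Finite) :
    ∃ a : ℤ → ℤ, StrictMono a ∧ ∀ k j, f k = j ↔ (a j ≤ k ∧ k < a (j + 1)) := by
  have hex : ∀ j : ℤ, ∃ m, f m = j ∧ ∀ k, f k = j → m ≤ k := by
    intro j
    obtain ⟨m, hm, hmin⟩ := Set.exists_min_image {k | f k = j} id (hfin j)
      (by obtain ⟨k0, hk0⟩ := hsurj j; exact ⟨k0, hk0⟩)
    exact ⟨m, hm, fun k hk => hmin k hk⟩
  choose a ha hmin using hex
  have hsm : StrictMono a := by
    intro j j' hjj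
    by_contra hc
    push_neg at hc
    have := hf hc
    rw [ha j', ha j] at this
    omega
  refine ⟨a, hsm, fun k j => ⟨fun hk => ⟨hmin j k hk, ?_⟩, fun ⟨h1, h2⟩ => ?_⟩⟩
  · by_contra hc
    push_neg at hc
    have := hf hc
    rw [ha (j+1)] at this
    omega
  · have hle : j ≤ f k := by have := hf h1; rwa [ha j] at this
    have : f k ≤ j := by
      by_contra hc
      push_neg at hc
      have h3 : a (j + 1) ≤ a (f k) := hsm.monotone (by omega)
      have h4 : a (f k) ≤ k := hmin (f k) k rfl
      omega
    omega

lemma ncard_Ico_int (x y : ℤ) : (Set.Ico x y).ncard = (y - x).toNat := by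
  rw [← Finset.coe_Ico, Set.ncard_coe_finset, Int.card_Ico]

lemma merge_half {a A : ℤ → ℤ} {g : ℤ → ℤ} {B : ℕ}
    (ha : StrictMono a) (hA : StrictMono A)
    (hgap : ∀ j, a (j + 1) - a j ≤ A (j + 1) - A j)
    (hBgap : ∀ j, A (j + 1) - A j ≤ (B : ℤ))
    (hg : ∀ i, A (g i) ≤ i ∧ i < A (g i + 1))
    (hcover : ∀ k, ∃ j, a j ≤ k ∧ k < a (j + 1)) :
    ∃ p : ℤ → ℤ, Monotone p ∧ Function.Surjective p ∧
      (∀ i, a (g i) ≤ p i ∧ p i < a (g i + 1)) ∧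
      (∀ k, {i | p i = k}.Finite ∧ {i | p i = k}.ncard ≤ B) := by
  have gchar : ∀ i j, A j ≤ i → i < A (j + 1) → g i = j := by
    intro i j h1 h2
    have hgi := hg i
    rcases lt_trichotomy (g i) j with h | h | h
    · have : A (g i + 1) ≤ A j := hA.monotone (by omega)
      omega
    · exact h
    · have : A (j + 1) ≤ A (g i) := hA.monotone (by omega)
      omega
  have gmono : Monotone g := by
    intro i i' hii
    by_contra hc
    push_neg at hc
    have h1 := hg i
    have h2 := hg i'
    have : A (g i' + 1) ≤ A (g i) := hA.monotone (by omega)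
    omega
  refine ⟨fun i => min (a (g i) + (i - A (g i))) (a (g i + 1) - 1), ?_, ?_, ?_, ?_⟩
  · -- monotone
    intro i i' hii
    dsimp only
    have hgle := gmono hii
    rcases hgle.lt_or_eq with hlt | heq
    · have h1 : a (g i + 1) ≤ a (g i') := ha.monotone (by omega)
      have h2 := hg i
      have h3 := hg i'
      have h4 : a (g i') < a (g i' + 1) := ha (lt_add_one _)
      omega
    · rw [heq]
      have := hg i
      have := hg i'
      rw [heq] at *
      omega
  · -- surjective
    intro k
    obtain ⟨j, hj1, hj2⟩ := hcover k
    refine ⟨A j + (k - a j), ?_⟩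
    have hgA : g (A j + (k - a j)) = j := by
      apply gchar
      · omega
      · have := hgap j
        omega
    dsimp only
    rw [hgA]
    omega
  · -- bounds
    intro i
    dsimp only
    have h1 := hg i
    have h2 : a (g i) < a (g i + 1) := ha (lt_add_one _)
    omega
  · -- fibers
    intro k
    obtain ⟨j, hj1, hj2⟩ := hcover k
    have hsub : {i | (fun i => min (a (g i) + (i - A (g i))) (a (g i + 1) - 1)) i = k}
        ⊆ Set.Ico (A j) (A (j + 1)) := by
      intro i hi
      simp only [Set.mem_setOf_eq] at hi
      have h1 := hg i
      have h2 : a (g i) < a (g i + 1) := ha (lt_add_one _)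
      have hbk : a (g i) ≤ k ∧ k < a (g i + 1) := by omega
      -- uniqueness: g i = j
      have hgj : g i = j := by
        rcases lt_trichotomy (g i) j with h | h | h
        · have : a (g i + 1) ≤ a j := ha.monotone (by omega)
          omega
        · exact h
        · have : a (j + 1) ≤ a (g i) := ha.monotone (by omega)
          omega
      rw [hgj] at h1
      exact ⟨h1.1, h1.2⟩
    constructor
    · exact (Set.finite_Ico _ _).subset hsub
    · calc {i | (fun i => min (a (g i) + (i - A (g i))) (a (g i + 1) - 1)) i = k}.ncard
          ≤ (Set.Ico (A j) (A (j + 1))).ncard :=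
            Set.ncard_le_ncard hsub (Set.finite_Ico _ _)
        _ ≤ B := by rw [ncard_Ico_int]; have := hBgap j; omega

lemma preimage_fiber {p : ℤ → ℤ} {b : ℕ}
    (hfib : ∀ k, {i | p i = k}.Finite ∧ {i | p i = k}.ncard ≤ b)
    {S : Set ℤ} (hS : S.Finite) {m : ℕ} (hm : S.ncard ≤ m) :
    (p ⁻¹' S).Finite ∧ (p ⁻¹' S).ncard ≤ m * b := by
  classical
  have heq : p ⁻¹' S = ⋃ y ∈ S, {i | p i = y} := by
    ext i; simp [Set.mem_preimage]
  constructor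
  · rw [heq]; exact Set.Finite.biUnion hS (fun y _ => (hfib y).1)
  · have heq2 : p ⁻¹' S = ↑(hS.toFinset.biUnion (fun y => (hfib y).1.toFinset)) := by
      rw [heq]; ext i; simp
    rw [heq2, Set.ncard_coe_finset]
    calc (hS.toFinset.biUnion fun y => (hfib y).1.toFinset).card
        ≤ ∑ y ∈ hS.toFinset, ((hfib y).1.toFinset).card := Finset.card_biUnion_le
      _ ≤ ∑ _y ∈ hS.toFinset, b := by
          refine Finset.sum_le_sum (fun y _ => ?_)
          rw [← Set.ncard_eq_toFinset_card _ (hfib y).1]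
          exact (hfib y).2
      _ = hS.toFinset.card * b := by rw [Finset.sum_const, smul_eq_mul]
      _ ≤ m * b := by
          have : hS.toFinset.card = S.ncard := (Set.ncard_eq_toFinset_card _ hS).symm
          rw [this]
          exact Nat.mul_le_mul_right b hm

lemma isRepr_to_base {θψ γ : ℤ → ℝ} (hψ : StrictMono θψ) (h : IsRepr γ θψ) :
    ∃ (f : ℤ → ℤ) (m : ℕ), Monotone f ∧ Function.Surjective f ∧ (∀ k, θψ (f k) = γ k) ∧
      (∀ j, {k | f k = j}.Finite ∧ {k | f k = j}.ncard ≤ m) := by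
  obtain ⟨hmono, hrange, m₀, hfib⟩ := h
  have hex : ∀ k : ℤ, ∃ j, θψ j = γ k := by
    intro k
    have : γ k ∈ Set.range θψ := hrange ▸ Set.mem_range_self k
    exact this.imp (fun j hj => hj)
  choose f hf using hex
  have hmonof : Monotone f := by
    intro k k' hkk
    have : θψ (f k) ≤ θψ (f k') := by rw [hf, hf]; exact hmono hkk
    exact hψ.le_iff_le.mp this
  have hsurj : Function.Surjective f := by
    intro j
    have : θψ j ∈ Set.range γ := hrange.symm ▸ Set.mem_range_self j
    obtain ⟨k, hk⟩ := this
    exact ⟨k, hψ.injective (by rw [hf, hk])⟩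
  have hfeq : ∀ j, {k | f k = j} = {k | γ k = θψ j} := by
    intro j
    ext k
    simp only [Set.mem_setOf_eq]
    constructor
    · intro hk; rw [← hf, hk]
    · intro hk; exact hψ.injective (by rw [hf, hk])
  refine ⟨f, m₀, hmonof, hsurj, hf, fun j => ?_⟩
  rw [hfeq]
  exact hfib (θψ j)

lemma exists_merge {f1 f2 : ℤ → ℤ} {m1 m2 : ℕ}
    (h1m : Monotone f1) (h1s : Function.Surjective f1)
    (h1f : ∀ j, {k | f1 k = j}.Finite ∧ {k | f1 k = j}.ncard ≤ m1)
    (h2m : Monotone f2) (h2s : Function.Surjective f2)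
    (h2f : ∀ j, {k | f2 k = j}.Finite ∧ {k | f2 k = j}.ncard ≤ m2) :
    ∃ p1 p2 : ℤ → ℤ, Monotone p1 ∧ Monotone p2 ∧
      Function.Surjective p1 ∧ Function.Surjective p2 ∧
      (∀ k, {i | p1 i = k}.Finite ∧ {i | p1 i = k}.ncard ≤ m1 + m2) ∧
      (∀ k, {i | p2 i = k}.Finite ∧ {i | p2 i = k}.ncard ≤ m1 + m2) ∧
      ∀ i, f1 (p1 i) = f2 (p2 i) := by
  obtain ⟨a1, ha1, hc1⟩ := exists_base h1m h1s (fun j => (h1f j).1)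
  obtain ⟨a2, ha2, hc2⟩ := exists_base h2m h2s (fun j => (h2f j).1)
  -- gap bounds
  have hfib1 : ∀ j, {k | f1 k = j} = Set.Ico (a1 j) (a1 (j + 1)) := by
    intro j; ext k; simp only [Set.mem_setOf_eq, Set.mem_Ico]; exact hc1 k j
  have hfib2 : ∀ j, {k | f2 k = j} = Set.Ico (a2 j) (a2 (j + 1)) := by
    intro j; ext k; simp only [Set.mem_setOf_eq, Set.mem_Ico]; exact hc2 k j
  have hgap1 : ∀ j, a1 (j + 1) - a1 j ≤ (m1 : ℤ) := by
    intro j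
    have := (h1f j).2
    rw [hfib1 j, ncard_Ico_int] at this
    omega
  have hgap2 : ∀ j, a2 (j + 1) - a2 j ≤ (m2 : ℤ) := by
    intro j
    have := (h2f j).2
    rw [hfib2 j, ncard_Ico_int] at this
    omega
  have hg1pos : ∀ j, 1 ≤ a1 (j + 1) - a1 j := fun j => by
    have := ha1 (lt_add_one j); omega
  have hg2pos : ∀ j, 1 ≤ a2 (j + 1) - a2 j := fun j => by
    have := ha2 (lt_add_one j); omega
  set A : ℤ → ℤ := fun j => a1 j + a2 j with hA
  have hAsm : StrictMono A := fun j j' h => by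
    have := ha1 h; have := ha2 h; simp only [hA]; omega
  have hgex : ∀ i : ℤ, ∃ j, A j ≤ i ∧ i < A (j + 1) := by
    intro i
    obtain ⟨j, hj, hmax⟩ := Int.exists_greatest_of_bdd (P := fun j => A j ≤ i)
      ⟨max (i - A 0) 0, by
        intro z hz
        rcases le_or_gt z 0 with h | h
        · omega
        · have := strictMono_int_diff_le hAsm 0 z (by omega)
          omega⟩
      ⟨min (i - A 0) 0, by
        have := strictMono_int_diff_le hAsm (min (i - A 0) 0) 0 (by omega)
        omega⟩
    refine ⟨j, hj, ?_⟩
    by_contra h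
    push_neg at h
    have := hmax _ h
    omega
  choose g hg using hgex
  obtain ⟨p1, hp1m, hp1s, hp1b, hp1f⟩ := merge_half (a := a1) (A := A) (g := g) (B := m1 + m2)
    ha1 hAsm (fun j => by have := hg2pos j; simp only [hA]; omega)
    (fun j => by have := hgap1 j; have := hgap2 j; push_cast; simp only [hA]; omega)
    hg (fun k => ⟨f1 k, (hc1 k (f1 k)).mp rfl⟩)
  obtain ⟨p2, hp2m, hp2s, hp2b, hp2f⟩ := merge_half (a := a2) (A := A) (g := g) (B := m1 + m2)
    ha2 hAsm (fun j => by have := hg1pos j; simp only [hA]; omega)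
    (fun j => by have := hgap1 j; have := hgap2 j; push_cast; simp only [hA]; omega)
    hg (fun k => ⟨f2 k, (hc2 k (f2 k)).mp rfl⟩)
  refine ⟨p1, p2, hp1m, hp2m, hp1s, hp2s, hp1f, hp2f, fun i => ?_⟩
  have h1 : f1 (p1 i) = g i := (hc1 _ _).mpr ⟨(hp1b i).1, (hp1b i).2⟩
  have h2 : f2 (p2 i) = g i := (hc2 _ _).mpr ⟨(hp2b i).1, (hp2b i).2⟩
  rw [h1, h2]

lemma isRepr_shift {γ θ : ℤ → ℝ} (s : ℝ) (h : IsRepr γ θ) :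
    IsRepr (fun i => γ i - s) (fun i => θ i - s) := by
  obtain ⟨hmono, hrange, m₀, hfib⟩ := h
  refine ⟨fun i j hij => by simpa using hmono hij, ?_, m₀, ?_⟩
  · ext x
    simp only [Set.mem_range]
    constructor
    · rintro ⟨i, hi⟩
      have : γ i ∈ Set.range θ := hrange ▸ Set.mem_range_self i
      obtain ⟨j, hj⟩ := this
      exact ⟨j, by rw [hj, hi]⟩
    · rintro ⟨j, hj⟩
      have : θ j ∈ Set.range γ := hrange.symm ▸ Set.mem_range_self j
      obtain ⟨i, hi⟩ := this
      exact ⟨i, by rw [hi, hj]⟩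
  · intro x
    have : {k : ℤ | γ k - s = x} = {k : ℤ | γ k = x + s} := by
      ext k; simp only [Set.mem_setOf_eq]; constructor <;> intro h <;> linarith
    rw [this]
    exact hfib (x + s)

lemma funEquiv_shift {n : ℕ} {u v : ℝ → (Fin n → ℝ)} {θu θv : ℤ → ℝ} {ε : ℝ} (s : ℝ)
    (h : FunEquiv u θu v θv ε) :
    FunEquiv (fun t => u (t + s)) (fun i => θu i - s) (fun t => v (t + s))
      (fun i => θv i - s) ε := by
  obtain ⟨⟨γ, γ', hγ, hγ', c, hc, hd⟩, hfun⟩ := h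
  refine ⟨⟨fun i => γ i - s, fun i => γ' i - s, isRepr_shift s hγ, isRepr_shift s hγ',
    c, hc, fun i => by have := hd i; rw [show γ i - s - (γ' i - s) = γ i - γ' i by ring]; exact this⟩, ?_⟩
  intro t ht
  have ht' : ∀ i : ℤ, ε ≤ |t + s - θu i| ∧ ε ≤ |t + s - θv i| := by
    intro i
    have := ht i
    rw [show t - (θu i - s) = t + s - θu i by ring, show t - (θv i - s) = t + s - θv i by ring] at this
    exact this
  exact hfun (t + s) ht'

lemma funEquiv_symm {n : ℕ} {u v : ℝ → (Fin n → ℝ)} {θu θv : ℤ → ℝ} {ε : ℝ}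
    (h : FunEquiv u θu v θv ε) : FunEquiv v θv u θu ε := by
  obtain ⟨⟨γ, γ', hγ, hγ', c, hc, hd⟩, hfun⟩ := h
  refine ⟨⟨γ', γ, hγ', hγ, c, hc, fun i => by rw [abs_sub_comm]; exact hd i⟩, ?_⟩
  intro t ht
  have := hfun t (fun i => ⟨(ht i).2, (ht i).1⟩)
  rwa [norm_sub_rev] at this

lemma funEquiv_trans {n : ℕ} {u v ψ : ℝ → (Fin n → ℝ)} {θu θv θψ : ℤ → ℝ} {ε : ℝ}
    (hε : 0 < ε) (hψsm : StrictMono θψ)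
    (hu : FunEquiv u θu ψ θψ (ε / 2)) (hv : FunEquiv v θv ψ θψ (ε / 2)) :
    FunEquiv u θu v θv ε := by
  obtain ⟨⟨γu, γ1, hγu, hγ1, c₁, hc₁, hd₁⟩, hfu⟩ := hu
  obtain ⟨⟨γv, γ2, hγv, hγ2, c₂, hc₂, hd₂⟩, hfv⟩ := hv
  constructor
  · -- SeqEquiv θu θv ε
    obtain ⟨f1, m1, hf1m, hf1s, hf1eq, hf1f⟩ := isRepr_to_base hψsm hγ1
    obtain ⟨f2, m2, hf2m, hf2s, hf2eq, hf2f⟩ := isRepr_to_base hψsm hγ2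
    obtain ⟨p1, p2, hp1m, hp2m, hp1s, hp2s, hp1f, hp2f, hpp⟩ :=
      exists_merge hf1m hf1s hf1f hf2m hf2s hf2f
    obtain ⟨hum, hur, mu, huf⟩ := hγu
    obtain ⟨hvm, hvr, mv, hvf⟩ := hγv
    refine ⟨γu ∘ p1, γv ∘ p2, ⟨hum.comp hp1m, ?_, mu * (m1 + m2), fun x => ?_⟩,
      ⟨hvm.comp hp2m, ?_, mv * (m1 + m2), fun x => ?_⟩, c₁ + c₂, by linarith, fun i => ?_⟩
    · rw [Set.range_comp, hp1s.range_eq, Set.image_univ, hur]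
    · have : {k : ℤ | (γu ∘ p1) k = x} = p1 ⁻¹' {k : ℤ | γu k = x} := rfl
      rw [this]
      exact preimage_fiber hp1f (huf x).1 (huf x).2
    · rw [Set.range_comp, hp2s.range_eq, Set.image_univ, hvr]
    · have : {k : ℤ | (γv ∘ p2) k = x} = p2 ⁻¹' {k : ℤ | γv k = x} := rfl
      rw [this]
      exact preimage_fiber hp2f (hvf x).1 (hvf x).2
    · -- |γu (p1 i) - γv (p2 i)| ≤ c₁ + c₂
      have hmid : γ1 (p1 i) = γ2 (p2 i) := by
        rw [← hf1eq, ← hf2eq, hpp i]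
      have e2' : |γ2 (p2 i) - γv (p2 i)| ≤ c₂ := by rw [abs_sub_comm]; exact hd₂ _
      calc |(γu ∘ p1) i - (γv ∘ p2) i|
          ≤ |γu (p1 i) - γ1 (p1 i)| + |γ1 (p1 i) - γv (p2 i)| := abs_sub_le _ _ _
        _ ≤ c₁ + c₂ := add_le_add (hd₁ _) (by rw [hmid]; exact e2')
  · -- function part
    intro t ht
    have hψfar : ∀ j : ℤ, ε / 2 ≤ |t - θψ j| := by
      intro j
      by_contra hcon
      push_neg at hcon
      have h1 : θψ j ∈ Set.range γ1 := hγ1.2.1 ▸ Set.mem_range_self j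
      obtain ⟨kk, hkk⟩ := h1
      have h2 : γu kk ∈ Set.range θu := hγu.2.1 ▸ Set.mem_range_self kk
      obtain ⟨i, hi⟩ := h2
      have h3 := (ht i).1
      have h4 := hd₁ kk
      have h5 : |t - θu i| ≤ |t - γ1 kk| + |γ1 kk - γu kk| := by
        rw [← hi]
        exact abs_sub_le _ _ _
      have h6 : |γ1 kk - γu kk| ≤ c₁ := by rw [abs_sub_comm]; exact h4
      rw [hkk] at h5 h6
      linarith
    have h1 := hfu t (fun i => ⟨by linarith [(ht i).1], hψfar i⟩)
    have h2 := hfv t (fun i => ⟨by linarith [(ht i).2], hψfar i⟩)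
    have h3 : ‖u t - v t‖ ≤ ‖u t - ψ t‖ + ‖v t - ψ t‖ := by
      have := dist_triangle (u t) (ψ t) (v t)
      rw [dist_eq_norm, dist_eq_norm, dist_eq_norm] at this
      rw [show ‖ψ t - v t‖ = ‖v t - ψ t‖ from norm_sub_rev _ _] at this
      exact this
    linarith

/-- Auxiliary sequence for the contradiction argument: `(seqAux A n).1` is the
`n`-th shift, `(seqAux A n).2` is a bound on the absolute values so far. -/
noncomputable def seqAux (A : ℝ → ℝ) : ℕ → ℝ × ℝ
  | 0 => (0, 0)
  | n + 1 =>
    let L : ℝ := 2 * (seqAux A n).2 + 1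
    (A L + L / 2, max (seqAux A n).2 |A L + L / 2|)

/-- sufficiency part of the Bochner criterion: if every sequence
of shifts of φ has a subsequence converging in B-topology, then φ is
Bohr–Wexler almost periodic. -/
theorem bochner_property_implies_BWAP
    (n : ℕ) (φ : ℝ → (Fin n → ℝ)) (θ : ℤ → ℝ) (hθ : InTheta θ)
    -- φ piecewise continuous with discontinuity sequence θ, right-continuous,
    -- uniformly continuous on the union of the open intervals (θᵢ, θ_{i+1})
    (hpc : ∀ i : ℤ, ContinuousOn φ (Set.Ico (θ i) (θ (i + 1))))
    (hunif : ∀ ε : ℝ, 0 < ε → ∃ δ : ℝ, 0 < δ ∧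
      ∀ i : ℤ, ∀ s ∈ Set.Ioo (θ i) (θ (i + 1)), ∀ t ∈ Set.Ioo (θ i) (θ (i + 1)),
        |s - t| < δ → ‖φ s - φ t‖ < ε)
    -- the Bochner property
    (hBochner : ∀ h' : ℕ → ℝ, ∃ k : ℕ → ℕ, StrictMono k ∧
      ∃ ψ : ℝ → (Fin n → ℝ), ∃ θψ : ℤ → ℝ, InTheta θψ ∧
        ∀ ε : ℝ, 0 < ε → ∃ N : ℕ, ∀ n' : ℕ, N ≤ n' →
          FunEquiv (fun t => φ (t + h' (k n'))) (fun i => θ i - h' (k n')) ψ θψ ε) :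
    -- φ is Bohr–Wexler almost periodic
    ∀ ε : ℝ, 0 < ε → RelDenseR
      {τ : ℝ | FunEquiv (fun t => φ (t + τ)) (fun i => θ i - τ) φ θ ε} := by
  intro ε hε
  set S : Set ℝ := {τ : ℝ | FunEquiv (fun t => φ (t + τ)) (fun i => θ i - τ) φ θ ε} with hS
  by_contra hcon
  rw [RelDenseR] at hcon
  push_neg at hcon
  -- choice function for gaps
  have H2 : ∀ L : ℝ, ∃ a : ℝ, 0 < L → ∀ τ ∈ S, τ ∉ Set.Icc a (a + L) := by
    intro L
    by_cases hL : 0 < L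
    · obtain ⟨a, ha⟩ := hcon L hL
      exact ⟨a, fun _ τ hτ hicc => (ha τ hτ hicc).elim⟩
    · exact ⟨0, fun h => absurd h hL⟩
  choose A hA using H2
  set h' : ℕ → ℝ := fun m => (seqAux A m).1 with hh'
  set M : ℕ → ℝ := fun m => (seqAux A m).2 with hM
  have hM0 : ∀ m, 0 ≤ M m := by
    intro m
    induction m with
    | zero => simp [hM, seqAux]
    | succ p ih =>
        have : M (p + 1) = max (M p) |A (2 * M p + 1) + (2 * M p + 1) / 2| := by
          simp [hM, seqAux]
        rw [this]
        exact le_trans ih (le_max_left _ _)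
  have hMabs : ∀ m, |h' m| ≤ M m := by
    intro m
    cases m with
    | zero => simp [hh', hM, seqAux]
    | succ p =>
        have h1 : h' (p + 1) = A (2 * M p + 1) + (2 * M p + 1) / 2 := by
          simp [hh', hM, seqAux]
        have h2 : M (p + 1) = max (M p) |A (2 * M p + 1) + (2 * M p + 1) / 2| := by
          simp [hM, seqAux]
        rw [h1, h2]
        exact le_max_right _ _
  have hMmono : Monotone M := by
    apply monotone_nat_of_le_succ
    intro p
    have : M (p + 1) = max (M p) |A (2 * M p + 1) + (2 * M p + 1) / 2| := by
      simp [hM, seqAux]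
    rw [this]
    exact le_max_left _ _
  -- key: differences of distinct terms are not ε-translation numbers
  have hno : ∀ m p : ℕ, m < p → h' p - h' m ∉ S := by
    intro m p hmp
    cases p with
    | zero => omega
    | succ q =>
        have hmq : m ≤ q := by omega
        set L : ℝ := 2 * M q + 1 with hL
        have hLpos : 0 < L := by have := hM0 q; rw [hL]; linarith
        have hgap := hA L hLpos
        have h1 : h' (q + 1) = A L + L / 2 := by simp [hh', hL, hM, seqAux]
        intro hmem
        refine hgap _ hmem ?_
        have habs : |h' m| ≤ M q := le_trans (hMabs m) (hMmono hmq)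
        rw [h1]
        constructor
        · rw [abs_le] at habs; rw [hL] at *; linarith [habs.2]
        · rw [abs_le] at habs; rw [hL] at *; linarith [habs.1]
  -- apply the Bochner property
  obtain ⟨k, hk, ψ, θψ, hθψ, hconv⟩ := hBochner h'
  obtain ⟨N, hN⟩ := hconv (ε / 2) (by linarith)
  set a₁ : ℝ := h' (k (N + 1)) with ha₁
  set a₂ : ℝ := h' (k N) with ha₂
  have hu := hN (N + 1) (by omega)
  have hv := hN N le_rfl
  have htrans := funEquiv_trans hε hθψ.1 hu hv
  have hshift := funEquiv_shift (-a₂) htrans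
  have e1 : (fun t : ℝ => φ (t + -a₂ + a₁)) = (fun t : ℝ => φ (t + (a₁ - a₂))) :=
    funext fun t => congrArg φ (by ring)
  have e2 : (fun i : ℤ => (θ i - a₁) - (-a₂)) = (fun i : ℤ => θ i - (a₁ - a₂)) :=
    funext fun i => by ring
  have e3 : (fun t : ℝ => φ (t + -a₂ + a₂)) = φ :=
    funext fun t => congrArg φ (by ring)
  have e4 : (fun i : ℤ => (θ i - a₂) - (-a₂)) = θ :=
    funext fun i => by ring
  rw [e1, e2, e3, e4] at hshift
  have hmem : a₁ - a₂ ∈ S := hshift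
  exact hno (k N) (k (N + 1)) (hk (by omega)) hmem
end
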